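/- Canonical heap trace simulation: if gmod(P, ρwit(σ), τ, ppos, cpos) with a token at ppos, plus a heap g dead for ppos, executes a trace τ' reaching state ho, where τ·τ' is a prefix of σ and ppos ≤ cpos, then there exist a process P', positions ppos' ≤ cpos', and a heap g' dead for ppos' such that P →τ' P' and ho = gmod(P', ρwit(σ), τ·τ', ppos', cpos') with a token at ppos', plus g'. In particular ho ≠ ⊥. -/

import Mathlib

/-! ## Event systems -/

/-- Event systems: labeled transition systems. -/
structure ES (S E : Type) where
  trans : S → E → S → Prop

namespace ES

/-- Extension of the transition relation to finite sequences of events. -/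
inductive mtrans {S E : Type} (M : ES S E) : S → List E → S → Prop
  | nil (s : S) : mtrans M s [] s
  | snoc {s s' s'' : S} {τ : List E} {e : E} :
      mtrans M s τ s' → M.trans s' e s'' → mtrans M s (τ ++ [e]) s''

/-- The traces of an event system starting from a set of initial states. -/
def traces {S E : Type} (M : ES S E) (I : Set S) : Set (List E) :=
  {τ | ∃ s ∈ I, ∃ s', M.mtrans s τ s'}

/-- Traces starting from a single state. -/
def tracesFrom {S E : Type} (M : ES S E) (s : S) : Set (List E) :=
  M.traces {s}

end ES

/-! ## Chunks and heaps -/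

/-- Chunks: I/O permissions `bio(t, v, w, t')` and tokens `token(t)`. -/
inductive Chunk (B V Pl : Type) : Type
  | bio (b : B) (t : Pl) (v w : V) (t' : Pl)
  | token (t : Pl)

/-- Heaps are (possibly infinite) multisets of chunks, i.e. functions to `ℕ∞`. -/
abbrev Heap (B V Pl : Type) := Chunk B V Pl → ℕ∞

open Classical in
/-- The singleton heap containing one chunk. -/
noncomputable def Heap.single {B V Pl : Type} (c : Chunk B V Pl) : Heap B V Pl :=
  fun c' => if c' = c then 1 else 0

/-- Well-typedness of a chunk w.r.t. a typing function `Ty`. -/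
def Chunk.wellTyped {B V Pl : Type} (Ty : B → V → Set V) : Chunk B V Pl → Prop
  | .bio b _ v w _ => w ∈ Ty b v
  | .token _ => True

/-! ## Assertions (coinductive, as an M-type) -/

/-- Heads of the assertion functor. -/
inductive AssnHead (B V Pl : Type) : Type
  | bool (b : Bool)
  | chunk (c : Chunk B V Pl)
  | star
  | exv
  | expl

/-- Arities (branching types) of the assertion functor. -/
def AssnAr (B V Pl : Type) : AssnHead B V Pl → Type
  | .bool _ => Empty
  | .chunk _ => Empty
  | .star => Bool
  | .exv => V
  | .expl => Pl

/-- The assertion polynomial functor. -/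
def AssnF (B V Pl : Type) : PFunctor := ⟨AssnHead B V Pl, AssnAr B V Pl⟩

/-- Coinductive separation logic assertions:
`φ ::=ν b | c | φ₁ ⋆ φ₂ | ∃v. φ | ∃t. φ`. -/
def Assn (B V Pl : Type) : Type := (AssnF B V Pl).M

namespace Assn

variable {B V Pl : Type}

/-- Boolean assertion. -/
def mkBool (b : Bool) : Assn B V Pl := PFunctor.M.mk ⟨.bool b, fun e => e.elim⟩

/-- Chunk assertion. -/
def mkChunk (c : Chunk B V Pl) : Assn B V Pl := PFunctor.M.mk ⟨.chunk c, fun e => e.elim⟩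

/-- Separating conjunction. -/
def star (φ ψ : Assn B V Pl) : Assn B V Pl :=
  PFunctor.M.mk ⟨.star, fun x : Bool => if x then φ else ψ⟩

/-- Existential quantification over values. -/
def exv (f : V → Assn B V Pl) : Assn B V Pl := PFunctor.M.mk ⟨.exv, f⟩

/-- Existential quantification over places. -/
def expl (f : Pl → Assn B V Pl) : Assn B V Pl := PFunctor.M.mk ⟨.expl, f⟩

end Assn

/-- One step of the satisfaction relation. -/
def SatF {B V Pl : Type} (Ty : B → V → Set V)
    (R : Heap B V Pl → Assn B V Pl → Prop) (h : Heap B V Pl) (φ : Assn B V Pl) : Prop :=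
  match PFunctor.M.dest φ with
  | ⟨.bool b, _⟩ => b = true
  | ⟨.chunk c, _⟩ => 0 < h c ∧ c.wellTyped Ty
  | ⟨.star, f⟩ => ∃ h1 h2, h = h1 + h2 ∧ R h1 (f true) ∧ R h2 (f false)
  | ⟨.exv, f⟩ => ∃ v, R h (f v)
  | ⟨.expl, f⟩ => ∃ t, R h (f t)

/-- Coinductive satisfaction relation `h ⊨ φ`, as the greatest fixed point
of `SatF` (defined as the union of all post-fixed points). -/
def sat {B V Pl : Type} (Ty : B → V → Set V) (h : Heap B V Pl) (φ : Assn B V Pl) : Prop :=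
  ∃ R, (∀ h' φ', R h' φ' → SatF Ty R h' φ') ∧ R h φ

/-! ## Heap transition system -/

/-- The heap transition system over `Option Heap` (`none` is the chaotic state ⊥),
with rules Bio, Contradict, and Chaos. -/
inductive HTrans {B V Pl : Type} (Ty : B → V → Set V) :
    Option (Heap B V Pl) → B × V × V → Option (Heap B V Pl) → Prop
  | bio {b : B} {v w : V} {t t' : Pl} {h : Heap B V Pl} :
      w ∈ Ty b v →
      HTrans Ty (some (Heap.single (.token t) + Heap.single (.bio b t v w t') + h)) (b, v, w)
        (some (Heap.single (.token t') + h))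
  | contradict {b : B} {v w w' : V} {t t' : Pl} {h : Heap B V Pl} :
      w ≠ w' → w ∈ Ty b v → w' ∈ Ty b v →
      HTrans Ty (some (Heap.single (.token t) + Heap.single (.bio b t v w t') + h)) (b, v, w')
        none
  | chaos {b : B} {v w : V} : w ∈ Ty b v → HTrans Ty none (b, v, w) none

/-- The heap transition system as an event system. -/
def hES {B V Pl : Type} (Ty : B → V → Set V) : ES (Option (Heap B V Pl)) (B × V × V) :=
  ⟨HTrans Ty⟩

/-- Traces executable in all heaps of a set of heaps. -/
def tracesH {B V Pl : Type} (Ty : B → V → Set V) (H : Set (Heap B V Pl)) :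
    Set (List (B × V × V)) :=
  {τ | ∀ h ∈ H, τ ∈ (hES Ty).tracesFrom (some h)}

/-- Traces of an assertion: traces executable in all its heap models. -/
def tracesHA {B V Pl : Type} (Ty : B → V → Set V) (φ : Assn B V Pl) :
    Set (List (B × V × V)) :=
  tracesH Ty {h | sat Ty h φ}

/-! ## Processes (coinductive, as an M-type) -/

/-- Heads of the process functor. -/
inductive ProcHead (B V : Type) : Type
  | null
  | pre (b : B) (v : V)
  | choice

/-- Arities of the process functor. -/
def ProcAr (B V : Type) : ProcHead B V → Type
  | .null => Empty
  | .pre _ _ => V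
  | .choice => Bool

/-- The process polynomial functor. -/
def ProcF (B V : Type) : PFunctor := ⟨ProcHead B V, ProcAr B V⟩

/-- Coinductive processes: `P ::=ν Null | bio(v, z).P | P₁ ⊕ P₂`. -/
def Proc (B V : Type) : Type := (ProcF B V).M

namespace Proc

variable {B V : Type}

/-- The inactive process. -/
def null : Proc B V := PFunctor.M.mk ⟨.null, fun e => e.elim⟩

/-- Prefixing with an I/O operation, binding the input in the continuation. -/
def pre (b : B) (v : V) (k : V → Proc B V) : Proc B V := PFunctor.M.mk ⟨.pre b v, k⟩

/-- Binary choice. -/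
def choice (P Q : Proc B V) : Proc B V :=
  PFunctor.M.mk ⟨.choice, fun x : Bool => if x then P else Q⟩

end Proc

/-- Operational semantics of processes (rules Pref and Choice). -/
inductive PTrans {B V : Type} (Ty : B → V → Set V) : Proc B V → B × V × V → Proc B V → Prop
  | pref {P : Proc B V} {b : B} {v w : V} {k : V → Proc B V} :
      w ∈ Ty b v → PFunctor.M.dest P = ⟨.pre b v, k⟩ → PTrans Ty P (b, v, w) (k w)
  | chl {P P' : Proc B V} {a : B × V × V} {f : Bool → Proc B V} :
      PFunctor.M.dest P = ⟨.choice, f⟩ → PTrans Ty (f true) a P' → PTrans Ty P a P'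
  | chr {P P' : Proc B V} {a : B × V × V} {f : Bool → Proc B V} :
      PFunctor.M.dest P = ⟨.choice, f⟩ → PTrans Ty (f false) a P' → PTrans Ty P a P'

/-- The process operational semantics as an event system. -/
def pES {B V : Type} (Ty : B → V → Set V) : ES (Proc B V) (B × V × V) := ⟨PTrans Ty⟩

/-- Countable (ℕ-indexed) choice, defined corecursively from binary choice. -/
def vchoice {B V : Type} (f : ℕ → Proc B V) : Proc B V :=
  PFunctor.M.corec
    (fun s : Proc B V ⊕ ℕ =>
      match s with
      | .inl p => ⟨(PFunctor.M.dest p).1, fun x => Sum.inl ((PFunctor.M.dest p).2 x)⟩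
      | .inr n => ⟨.choice, fun x : Bool => if x then Sum.inl (f n) else Sum.inr (n + 1)⟩)
    (Sum.inr 0)

/-! ## Embedding of processes into assertions -/

/-- States of the corecursion defining the embedding `emb`. -/
inductive EmbSt (B V Pl : Type) : Type
  | proc (P : Proc B V) (t : Pl)
  | ex1 (b : B) (v : V) (k : V → Proc B V) (t t' : Pl)
  | star1 (b : B) (v : V) (k : V → Proc B V) (t t' : Pl) (z : V)
  | leafChunk (c : Chunk B V Pl)

/-- One step of the corecursion defining the embedding `emb`. -/
def embStep {B V Pl : Type} : EmbSt B V Pl → (AssnF B V Pl).Obj (EmbSt B V Pl)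
  | .proc P t =>
    match PFunctor.M.dest P with
    | ⟨.null, _⟩ => ⟨.bool true, fun e => e.elim⟩
    | ⟨.pre b v, k⟩ => ⟨.expl, fun t' => .ex1 b v k t t'⟩
    | ⟨.choice, f⟩ => ⟨.star, fun x : Bool => .proc (f x) t⟩
  | .ex1 b v k t t' => ⟨.exv, fun z => .star1 b v k t t' z⟩
  | .star1 b v k t t' z =>
      ⟨.star, fun x : Bool => if x then .leafChunk (.bio b t v z t') else .proc (k z) t'⟩
  | .leafChunk c => ⟨.chunk c, fun e => e.elim⟩

/-- The embedding `emb(P, t)` of a process and a place into an assertion: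
`emb(Null, t) = true`, `emb(bio(v,z).P, t) = ∃t',z'. bio(t,v,z',t') ⋆ emb(P[z'/z], t')`,
`emb(P₁ ⊕ P₂, t) = emb(P₁, t) ⋆ emb(P₂, t)`. -/
def embA {B V Pl : Type} (P : Proc B V) (t : Pl) : Assn B V Pl :=
  PFunctor.M.corec embStep (.proc P t)

/-- The process assertion `emb(P) = ∃t. token(t) ⋆ emb(P, t)`. -/
def procAssn {B V : Type} (Pl : Type) (P : Proc B V) : Assn B V Pl :=
  Assn.expl (fun t => Assn.star (Assn.mkChunk (.token t)) (embA P t))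

/-- ℕ-indexed iterated separating conjunction, defined corecursively. -/
def AllStar {B V Pl : Type} (f : ℕ → Assn B V Pl) : Assn B V Pl :=
  PFunctor.M.corec
    (fun s : Assn B V Pl ⊕ ℕ =>
      match s with
      | .inl a => ⟨(PFunctor.M.dest a).1, fun x => Sum.inl ((PFunctor.M.dest a).2 x)⟩
      | .inr n => ⟨.star, fun x : Bool => if x then Sum.inl (f n) else Sum.inr (n + 1)⟩)
    (Sum.inr 0)

/-! ## I/O-guarded event systems and their translation to processes -/

/-- An I/O-guarded event system: guards depend only on the state and the output,
updates compute the next state from output and input. -/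
structure IOGES (B V S : Type) where
  guard : B → V → S → Prop
  update : B → V → V → S → S

/-- The event system associated with an I/O-guarded event system:
`s →bio(v,w) s'` iff the guard holds, `w ∈ Ty(bio, v)`, and `s' = U(s)`. -/
def IOGES.es {B V S : Type} (G : IOGES B V S) (Ty : B → V → Set V) : ES S (B × V × V) :=
  ⟨fun s a s' => G.guard a.1 a.2.1 s ∧ a.2.2 ∈ Ty a.1 a.2.1 ∧
      s' = G.update a.1 a.2.1 a.2.2 s⟩

/-- States of the corecursion defining `proc(G, s)`. -/
inductive PrSt (S : Type) : Type
  | spine (n : ℕ) (s : S)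
  | item (n : ℕ) (s : S)

open Classical in
/-- The corecursive translation `proc(G, s)` of an I/O-guarded event system into
a process: the countable choice over all `bio ∈ Bios` and outputs `v` whose guard
holds in `s` of the prefixed processes `bio(v, z). proc(G, U_{bio(v,z)}(s))`,
via an enumeration `e` of the pairs `(bio, v)`. -/
noncomputable def procOf {B V S : Type} (e : ℕ → B × V) (G : IOGES B V S) (s : S) :
    Proc B V :=
  PFunctor.M.corec
    (fun st : PrSt S =>
      match st with
      | .spine n s => ⟨.choice, fun x : Bool => if x then .item n s else .spine (n + 1) s⟩
      | .item n s =>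
          if G.guard (e n).1 (e n).2 s then
            ⟨.pre (e n).1 (e n).2, fun w => .spine 0 (G.update (e n).1 (e n).2 w s)⟩
          else ⟨.null, fun x => x.elim⟩)
    (.spine 0 s)

/-! ## Canonical heap models -/

open Classical in
/-- The I/O permission (as a singleton heap, or the empty heap) found at position
`pos` of process `P` under input schedule `ρ`, with previous place `pp`,
current position `cp`, and traversed trace `τ`. -/
noncomputable def pm {B V : Type} (ρ : List (B × V × V) → B → V → V) :
    Proc B V → List (B × V × V) → List Bool → List Bool → List Bool →
      Heap B V (List Bool)
  | P, τ, pp, cp, [] =>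
    (match PFunctor.M.dest P with
     | ⟨.pre b v, _⟩ => Heap.single (Chunk.bio b pp v (ρ τ b v) (cp ++ [true]))
     | _ => 0)
  | P, τ, pp, cp, d :: pos =>
    (match PFunctor.M.dest P, d with
     | ⟨.pre b v, k⟩, true =>
         pm ρ (k (ρ τ b v)) (τ ++ [(b, v, ρ τ b v)]) (cp ++ [true]) (cp ++ [true]) pos
     | ⟨.choice, f⟩, d' => pm ρ (f d') τ pp (cp ++ [d']) pos
     | _, _ => 0)

/-- Pointwise (possibly infinite) sum of a family of heaps. -/
noncomputable def hSum {B V Pl ι : Type} (f : ι → Heap B V Pl) : Heap B V Pl :=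
  fun c => ⨆ F : Finset ι, ∑ i ∈ F, f i c

/-- The canonical model construction `gmod(P, ρ, τ, ppos, cpos)`: the multiset
sum of `pm(P, ρ, τ, ppos, cpos, pos)` over all positions `pos`. -/
noncomputable def gmod {B V : Type} (ρ : List (B × V × V) → B → V → V)
    (P : Proc B V) (τ : List (B × V × V)) (pp cp : List Bool) :
    Heap B V (List Bool) :=
  hSum (fun pos : List Bool => pm ρ P τ pp cp pos)

/-- Well-typedness of an input schedule. -/
def schedWT {B V : Type} (Ty : B → V → Set V) (ρ : List (B × V × V) → B → V → V) : Prop :=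
  ∀ τ b v, ρ τ b v ∈ Ty b v

/-- The canonical model `cmod(P, ρ) = gmod(P, ρ, [], [], [])`. -/
noncomputable def cmod {B V : Type} (ρ : List (B × V × V) → B → V → V) (P : Proc B V) :
    Heap B V (List Bool) :=
  gmod ρ P [] [] []

/-- The canonical model with a token added at the previous place. -/
noncomputable def gmodTok {B V : Type} (ρ : List (B × V × V) → B → V → V)
    (P : Proc B V) (τ : List (B × V × V)) (pp cp : List Bool) :
    Heap B V (List Bool) :=
  Heap.single (Chunk.token pp) + gmod ρ P τ pp cp

/-- The set `can(P)` of token-added canonical models over all well-typed schedules. -/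
def canSet {B V : Type} (Ty : B → V → Set V) (P : Proc B V) :
    Set (Heap B V (List Bool)) :=
  {h | ∃ ρ, schedWT Ty ρ ∧ h = Heap.single (Chunk.token []) + cmod ρ P}

/-- The set of source places of I/O permissions in a heap. -/
def srcplaces {B V Pl : Type} (h : Heap B V Pl) : Set Pl :=
  {t | ∃ b v w t', 0 < h (Chunk.bio b t v w t')}

/-- A heap is dead for a position if it has no tokens and no source place
extending the position. -/
def deadFor {B V : Type} (pos : List Bool) (h : Heap B V (List Bool)) : Prop :=
  (∀ t, h (Chunk.token t) = 0) ∧ ∀ p' ∈ srcplaces h, ¬ pos <+: p'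

open Classical in
/-- The witness schedule `ρwit(σ)`: for proper prefixes `τ` of `σ`, return the
input of the next matching action of `σ`; otherwise an arbitrary well-typed value
(given by `pick`). -/
noncomputable def rhoWit {B V : Type} (pick : B → V → V) (σ : List (B × V × V)) :
    List (B × V × V) → B → V → V :=
  fun τ b v =>
    if h : ∃ w, ∃ rest, τ <+: σ ∧ σ.drop τ.length = (b, v, w) :: rest
    then h.choose
    else pick b v

/-!
Induction on `τ'`, one heap transition at a time. Since `g` is dead for `pp` and `gmod` has
no tokens, the token consumed by a transition is the one at `pp`, and the consumed permission
has source `pp`; such a permission of `gmod ρ P τ pp cp` is the one at a position `pos` that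
reaches a prefix node of `P` through choices only, and its input is `ρ τ b v`. Under the
witness schedule that input is the one of the event, so `Contradict` cannot fire and `Bio`
consumes exactly this permission. What is left is the canonical model of the continuation at
the place `cp ++ pos ++ [true]`, plus the permissions at the other positions, none of whose
sources extends the new place: they join the dead heap.
-/

theorem ENat.hasSum_iSup_sum {ι : Type*} (f : ι → ℕ∞) :
    HasSum f (⨆ F : Finset ι, ∑ i ∈ F, f i) :=
  hasSum_of_isLUB _ isLUB_iSup

theorem ENat.summable {ι : Type*} (f : ι → ℕ∞) : Summable f :=
  (ENat.hasSum_iSup_sum f).summable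

section HeapSum

variable {B V Pl ι κ : Type}

theorem hSum_apply (f : ι → Heap B V Pl) (c : Chunk B V Pl) : hSum f c = ∑' i, f i c :=
  (ENat.hasSum_iSup_sum _).tsum_eq.symm

theorem exists_pos_of_hSum_pos {f : ι → Heap B V Pl} {c : Chunk B V Pl}
    (h : 0 < hSum f c) : ∃ i, 0 < f i c := by
  by_contra! hc
  simp_all [hSum_apply, nonpos_iff_eq_zero]

open Classical in
theorem hSum_eq_add_add_of_injective [DecidableEq ι] (f : ι → Heap B V Pl) {a : ι}
    {e : κ → ι} (he : e.Injective) (ha : a ∉ Set.range e) :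
    hSum f = f a + hSum (f ∘ e) + hSum fun i => if i = a ∨ i ∈ Set.range e then 0 else f i := by
  funext c
  have hsplit : ∀ i, f i c = ((if i = a then f i c else 0) +
      (if i ∈ Set.range e then f i c else 0)) + (if i = a ∨ i ∈ Set.range e then 0 else f i c) := by
    intro i
    by_cases hia : i = a
    · subst hia; simp [ha]
    · by_cases hie : i ∈ Set.range e <;> simp [hia, hie]
  have hrange : ∑' k, f (e k) c = ∑' i, if i ∈ Set.range e then f i c else 0 := by
    rw [← he.tsum_eq (Function.support_subset_iff'.mpr fun i hi => if_neg hi)]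
    simp
  simp only [Pi.add_apply, hSum_apply, Function.comp_apply, ite_apply, Pi.zero_apply]
  rw [tsum_congr hsplit, Summable.tsum_add (ENat.summable _) (ENat.summable _),
    Summable.tsum_add (ENat.summable _) (ENat.summable _), tsum_ite_eq, hrange]

end HeapSum

namespace Heap

variable {B V Pl : Type}

@[simp]
theorem single_apply_self (c : Chunk B V Pl) : single c c = 1 := by
  simp [single]

theorem single_apply_of_ne {c c' : Chunk B V Pl} (h : c' ≠ c) : single c c' = 0 := by
  simp [single, h]

theorem single_pos_iff {c c' : Chunk B V Pl} : 0 < single c c' ↔ c' = c := by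
  unfold single; split <;> simp [*]

theorem single_add_left_cancel {c : Chunk B V Pl} {x y : Heap B V Pl}
    (h : single c + x = single c + y) : x = y := by
  funext c'
  have hc : single c c' ≠ ⊤ := by unfold single; split <;> simp
  exact WithTop.add_left_cancel hc (congrFun h c')

end Heap

section Dead

variable {B V : Type} {p q : List Bool} {g g' : Heap B V (List Bool)}

theorem deadFor.mono (hpq : p <+: q) (hg : deadFor p g) : deadFor q g :=
  ⟨hg.1, fun s hs hqs => hg.2 s hs (hpq.trans hqs)⟩

theorem deadFor.add (hg : deadFor p g) (hg' : deadFor p g') : deadFor p (g + g') := by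
  refine ⟨fun t => by simp [hg.1 t, hg'.1 t], ?_⟩
  rintro s ⟨b, v, w, t', hs⟩
  rcases add_pos_iff.mp hs with h | h
  exacts [hg.2 s ⟨b, v, w, t', h⟩, hg'.2 s ⟨b, v, w, t', h⟩]

end Dead

inductive ChoicePath {B V : Type} : Proc B V → List Bool → B → V → (V → Proc B V) → Prop
  | here {P : Proc B V} {b : B} {v : V} {k : V → Proc B V} :
      PFunctor.M.dest P = ⟨.pre b v, k⟩ → ChoicePath P [] b v k
  | step {P : Proc B V} {f : Bool → Proc B V} {d : Bool} {pos : List Bool} {b : B} {v : V}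
      {k : V → Proc B V} :
      PFunctor.M.dest P = ⟨.choice, f⟩ → ChoicePath (f d) pos b v k →
        ChoicePath P (d :: pos) b v k

theorem ChoicePath.ptrans {B V : Type} {Ty : B → V → Set V} {P : Proc B V} {pos : List Bool}
    {b : B} {v : V} {k : V → Proc B V} {w : V} (h : ChoicePath P pos b v k) (hw : w ∈ Ty b v) :
    PTrans Ty P (b, v, w) (k w) := by
  induction h with
  | here hP => exact .pref hw hP
  | @step _ _ d _ _ _ _ hP _ ih => cases d <;> [exact .chr hP (ih hw); exact .chl hP (ih hw)]

section CanonicalModel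

variable {B V : Type} {ρ : List (B × V × V) → B → V → V}

theorem pm_token (P : Proc B V) (τ : List (B × V × V)) (pp cp pos t : List Bool) :
    pm ρ P τ pp cp pos (.token t) = 0 := by
  induction pos generalizing P τ pp cp with
  | nil =>
    rcases hP : PFunctor.M.dest P with ⟨_ | _ | _, k⟩ <;>
      simp [pm, hP, Heap.single_apply_of_ne]
  | cons d pos ih =>
    rcases hP : PFunctor.M.dest P with ⟨_ | _ | _, k⟩ <;> cases d <;>
      simp only [pm, hP, Pi.zero_apply] <;> exact ih ..

theorem gmod_token (P : Proc B V) (τ : List (B × V × V)) (pp cp t : List Bool) :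
    gmod ρ P τ pp cp (.token t) = 0 := by
  simp [gmod, hSum_apply, pm_token]

theorem source_of_pm_bio_pos {P : Proc B V} {τ : List (B × V × V)} {pp cp pos : List Bool}
    {b : B} {t : List Bool} {v w : V} {t' : List Bool}
    (h : 0 < pm ρ P τ pp cp pos (.bio b t v w t')) :
    (t = pp ∧ w = ρ τ b v ∧ t' = cp ++ pos ++ [true] ∧ ∃ k, ChoicePath P pos b v k) ∨
      ∃ q, q ++ [true] <+: pos ∧ t = cp ++ q ++ [true] := by
  induction pos generalizing P τ pp cp with
  | nil =>
    rcases hP : PFunctor.M.dest P with ⟨_ | ⟨b', v'⟩ | _, k⟩ <;>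
      simp only [pm, hP, Pi.zero_apply, lt_self_iff_false] at h
    obtain ⟨rfl, rfl, rfl, rfl, rfl⟩ := Chunk.bio.inj (Heap.single_pos_iff.mp h)
    exact .inl ⟨rfl, rfl, by simp, k, .here hP⟩
  | cons d pos ih =>
    rcases hP : PFunctor.M.dest P with ⟨_ | ⟨b', v'⟩ | _, k⟩
    · cases d <;> simp [pm, hP] at h
    · cases d
      · simp [pm, hP] at h
      · simp only [pm, hP] at h
        rcases ih h with ⟨rfl, -⟩ | ⟨q, hq, rfl⟩
        · exact .inr ⟨[], by simp, by simp⟩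
        · exact .inr ⟨true :: q, by simpa using hq, by simp⟩
    · simp only [pm, hP] at h
      rcases ih h with ⟨rfl, rfl, rfl, k', hk'⟩ | ⟨q, hq, rfl⟩
      · exact .inl ⟨rfl, rfl, by simp, k', .step hP hk'⟩
      · exact .inr ⟨d :: q, by simpa using hq, by simp⟩

theorem ChoicePath.pm_eq {P : Proc B V} {pos : List Bool} {b : B} {v : V}
    {k : V → Proc B V} (h : ChoicePath P pos b v k) (τ : List (B × V × V)) (pp cp : List Bool) :
    pm ρ P τ pp cp pos = Heap.single (.bio b pp v (ρ τ b v) (cp ++ pos ++ [true])) := by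
  induction h generalizing cp with
  | here hP => simp [pm, hP]
  | step hP _ ih => simp [pm, hP, ih]

theorem ChoicePath.pm_append_true_cons {P : Proc B V} {pos : List Bool} {b : B} {v : V}
    {k : V → Proc B V} (h : ChoicePath P pos b v k) (τ : List (B × V × V))
    (pp cp rest : List Bool) :
    pm ρ P τ pp cp (pos ++ true :: rest) =
      pm ρ (k (ρ τ b v)) (τ ++ [(b, v, ρ τ b v)]) (cp ++ pos ++ [true]) (cp ++ pos ++ [true])
        rest := by
  induction h generalizing cp with
  | here hP => simp [pm, hP]
  | step hP _ ih => simp [pm, hP, ih]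

open Classical in
noncomputable def gmodRest (ρ : List (B × V × V) → B → V → V) (P : Proc B V)
    (τ : List (B × V × V)) (pp cp pos : List Bool) : Heap B V (List Bool) :=
  hSum fun p =>
    if p = pos ∨ p ∈ Set.range (pos ++ true :: ·) then 0 else pm ρ P τ pp cp p

theorem ChoicePath.gmod_eq {P : Proc B V} {pos : List Bool} {b : B} {v : V}
    {k : V → Proc B V} (h : ChoicePath P pos b v k) (τ : List (B × V × V)) (pp cp : List Bool) :
    gmod ρ P τ pp cp =
      Heap.single (.bio b pp v (ρ τ b v) (cp ++ pos ++ [true])) +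
        gmod ρ (k (ρ τ b v)) (τ ++ [(b, v, ρ τ b v)]) (cp ++ pos ++ [true]) (cp ++ pos ++ [true]) +
        gmodRest ρ P τ pp cp pos := by
  have hinj : (pos ++ true :: ·).Injective := fun _ _ => by simp
  have hpos : pos ∉ Set.range (pos ++ true :: ·) := by
    rintro ⟨r, hr⟩
    simpa using congrArg List.length hr
  rw [gmod, hSum_eq_add_add_of_injective _ hinj hpos, h.pm_eq]
  congr 3
  funext rest
  exact h.pm_append_true_cons τ pp cp rest

theorem deadFor_gmodRest {pp cp : List Bool} (hpc : pp <+: cp) (P : Proc B V)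
    (τ : List (B × V × V)) (pos : List Bool) :
    deadFor (cp ++ pos ++ [true]) (gmodRest ρ P τ pp cp pos) := by
  refine ⟨fun t => by simp [gmodRest, hSum_apply, ite_apply, pm_token], ?_⟩
  rintro s ⟨b, v, w, t', hs⟩ hnp
  obtain ⟨p, hp⟩ := exists_pos_of_hSum_pos hs
  split_ifs at hp with hcnd
  · exact lt_irrefl _ hp
  rcases source_of_pm_bio_pos hp with ⟨rfl, -⟩ | ⟨q, hq, rfl⟩
  · have := hnp.length_le.trans hpc.length_le
    simp at this
  · rw [List.append_assoc, List.append_assoc, List.prefix_append_right_inj] at hnp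
    obtain ⟨r, rfl⟩ := hnp.trans hq
    exact hcnd (.inr ⟨r, by simp⟩)

end CanonicalModel

theorem rhoWit_eq_of_prefix {B V : Type} {pick : B → V → V} {σ τ : List (B × V × V)} {b : B}
    {v w : V} (h : τ ++ [(b, v, w)] <+: σ) : rhoWit pick σ τ b v = w := by
  obtain ⟨r, rfl⟩ := h
  have hex : ∃ w' rest, τ <+: τ ++ [(b, v, w)] ++ r ∧
      (τ ++ [(b, v, w)] ++ r).drop τ.length = (b, v, w') :: rest :=
    ⟨w, r, by simp [List.append_assoc], by simp⟩
  rw [rhoWit, dif_pos hex]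
  obtain ⟨rest, -, hd⟩ := hex.choose_spec
  simp_all

section Simulation

variable {B V : Type} {ρ : List (B × V × V) → B → V → V} {P : Proc B V}
  {τ : List (B × V × V)} {pp cp : List Bool} {g : Heap B V (List Bool)}

theorem exists_choicePath_of_token_bio_add_eq (hpc : pp <+: cp) (hg : deadFor pp g)
    {b : B} {v w : V} {t t' : List Bool} {x : Heap B V (List Bool)}
    (h : Heap.single (.token t) + Heap.single (.bio b t v w t') + x = gmodTok ρ P τ pp cp + g) :
    t = pp ∧ w = ρ τ b v ∧ ∃ pos k, ChoicePath P pos b v k ∧ t' = cp ++ pos ++ [true] := by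
  obtain rfl : t = pp := by
    by_contra hne
    simpa [gmodTok, gmod_token, hg.1, Heap.single_apply_of_ne, hne] using
      congrFun h (.token t)
  have hgbio : g (.bio b t v w t') = 0 := by
    by_contra hne
    exact hg.2 t ⟨b, v, w, t', pos_iff_ne_zero.mpr hne⟩ (List.prefix_refl t)
  have hbio : 0 < gmod ρ P τ t cp (.bio b t v w t') :=
    calc 0 < 1 + x (.bio b t v w t') := by positivity
      _ = _ := by
        simpa [gmodTok, hgbio, Heap.single_apply_of_ne] using congrFun h (.bio b t v w t')
  obtain ⟨pos, hp⟩ := exists_pos_of_hSum_pos hbio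
  rcases source_of_pm_bio_pos hp with ⟨-, hw, ht', k, hk⟩ | ⟨q, -, rfl⟩
  · exact ⟨rfl, hw, pos, k, hk, ht'⟩
  · simpa using hpc.length_le

theorem canonical_heap_step_simulation {Ty : B → V → Set V} {e : B × V × V}
    {ho : Option (Heap B V (List Bool))} (hρ : ρ τ e.1 e.2.1 = e.2.2) (hpc : pp <+: cp)
    (hg : deadFor pp g) (ht : HTrans Ty (some (gmodTok ρ P τ pp cp + g)) e ho) :
    ∃ (P' : Proc B V) (pp' cp' : List Bool) (g' : Heap B V (List Bool)),
      pp' <+: cp' ∧ deadFor pp' g' ∧ PTrans Ty P e P' ∧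
        ho = some (gmodTok ρ P' (τ ++ [e]) pp' cp' + g') := by
  generalize hs : some (gmodTok ρ P τ pp cp + g) = s at ht
  cases ht with
  | chaos => cases hs
  | contradict hne =>
    obtain ⟨-, hw, -⟩ := exists_choicePath_of_token_bio_add_eq hpc hg (Option.some.inj hs).symm
    exact absurd (hw.trans hρ) hne
  | @bio b v w t t' x hw =>
    have hheap := (Option.some.inj hs).symm
    obtain ⟨rfl, rfl, pos, k, hk, rfl⟩ := exists_choicePath_of_token_bio_add_eq hpc hg hheap
    refine ⟨k (ρ τ b v), _, _, g + gmodRest ρ P τ t cp pos, List.prefix_refl _,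
      (hg.mono (hpc.trans ((List.prefix_append _ _).trans (List.prefix_append _ _)))).add
        (deadFor_gmodRest hpc P τ pos), hk.ptrans hw, ?_⟩
    simp only [gmodTok, hk.gmod_eq, add_assoc] at hheap
    rw [Heap.single_add_left_cancel (Heap.single_add_left_cancel hheap), gmodTok]
    ac_rfl

end Simulation

theorem canonical_heap_trace_simulation_general {B V : Type} (Ty : B → V → Set V)
    (pick : B → V → V) (σ τ τ' : List (B × V × V)) (P : Proc B V) (pp cp : List Bool)
    (g : Heap B V (List Bool)) (ho : Option (Heap B V (List Bool)))
    (hpre : (τ ++ τ') <+: σ) (hpc : pp <+: cp) (hg : deadFor pp g)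
    (ht : (hES Ty).mtrans (some (gmodTok (rhoWit pick σ) P τ pp cp + g)) τ' ho) :
    ∃ (P' : Proc B V) (pp' cp' : List Bool) (g' : Heap B V (List Bool)),
      pp' <+: cp' ∧ deadFor pp' g' ∧ (pES Ty).mtrans P τ' P' ∧
        ho = some (gmodTok (rhoWit pick σ) P' (τ ++ τ') pp' cp' + g') := by
  induction ht with
  | nil => exact ⟨P, pp, cp, g, hpc, hg, .nil P, by simp⟩
  | @snoc _ _ τ' e _ hstep ih =>
    rw [← List.append_assoc] at hpre
    obtain ⟨P₁, pp₁, cp₁, g₁, hpc₁, hg₁, hP₁, rfl⟩ := ih ((List.prefix_append _ _).trans hpre)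
    obtain ⟨P₂, pp₂, cp₂, g₂, hpc₂, hg₂, hP₂, rfl⟩ :=
      canonical_heap_step_simulation (rhoWit_eq_of_prefix hpre) hpc₁ hg₁ hstep
    exact ⟨P₂, pp₂, cp₂, g₂, hpc₂, hg₂, .snoc hP₁ hP₂, by rw [List.append_assoc]⟩

/-- Canonical heap trace simulation: a trace of a token-added canonical model
under the witness schedule (plus a dead heap) is matched by a process execution
and leads again to a token-added canonical model plus a dead heap; in
particular, the reached state is not ⊥. -/
theorem canonical_heap_trace_simulation {B V : Type} (Ty : B → V → Set V)
    (pick : B → V → V) (hpick : ∀ b v, pick b v ∈ Ty b v)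
    (σ τ τ' : List (B × V × V)) (P : Proc B V) (pp cp : List Bool)
    (g : Heap B V (List Bool)) (ho : Option (Heap B V (List Bool)))
    (hpre : (τ ++ τ') <+: σ) (hpc : pp <+: cp) (hg : deadFor pp g)
    (ht : (hES Ty).mtrans (some (gmodTok (rhoWit pick σ) P τ pp cp + g)) τ' ho) :
    ∃ (P' : Proc B V) (pp' cp' : List Bool) (g' : Heap B V (List Bool)),
      pp' <+: cp' ∧ deadFor pp' g' ∧ (pES Ty).mtrans P τ' P' ∧
        ho = some (gmodTok (rhoWit pick σ) P' (τ ++ τ') pp' cp' + g') :=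
  canonical_heap_trace_simulation_general Ty pick σ τ τ' P pp cp g ho hpre hpc hg ht
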